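/- Drift inequalities for the magnetization chain: for every β ≥ 0 and every n, the magnetization chain (S_t) satisfies: (i) for every state s ≥ 0 in Ω_S, E[S_{t+1} − S_t | S_t = s] ≤ (1/n)(tanh(βs) − s); (ii) for every state s ≤ 0 in Ω_S, E[S_{t+1} − S_t | S_t = s] ≥ (1/n)(tanh(βs) − s); and (iii) for every state s with |s| > 1/n, E[|S_{t+1}| | S_t = s] ≤ |s| + (1/n)(tanh(β|s|) − |s|). -/

import Mathlib

/-!
From a state `s` the chain moves to `s ∓ 2/n` with probabilities
`d(s) = (1 + s)/2 · p₋(s - 1/n)` and `u(s) = (1 - s)/2 · p₊(s + 1/n)`, so its drift is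
`(2/n)(u - d) = (1/n)(½[(1 - s) tanh β(s + 1/n) + (1 + s) tanh β(s - 1/n)] - s)`.
For `s ≥ 0` the bracket is at most `2 tanh βs`: for `x ≥ 0`,
`tanh(x + δ) + tanh(x - δ) = sinh 2x / (cosh(x + δ) cosh(x - δ)) ≤ sinh 2x / cosh² x`,
which is `2 tanh x`,
and the extra weight `s` falls on the smaller value `tanh β(s - 1/n)`. The drift is odd in `s`,
which gives the case `s ≤ 0`. Finally, states are spaced `2/n` apart, so `|s| > 1/n` forces
`|s| ≥ 2/n`: the chain cannot cross `0` in one step and `E|S'| = |s| + drift(|s|)`.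
-/

open Filter Real

namespace CW

noncomputable section

def pPlus (β s : ℝ) : ℝ := (1 + Real.tanh (β * s)) / 2

def pMinus (β s : ℝ) : ℝ := (1 - Real.tanh (β * s)) / 2

def magVal (n : ℕ) (k : Fin (n + 1)) : ℝ := (2 * (k : ℕ) - n) / n

def magKernel (β : ℝ) (n : ℕ) (k l : Fin (n + 1)) : ℝ :=
  if (l : ℕ) + 1 = (k : ℕ) then
    ((1 + magVal n k) / 2) * pMinus β (magVal n k - 1 / n)
  else if (k : ℕ) + 1 = (l : ℕ) then
    ((1 - magVal n k) / 2) * pPlus β (magVal n k + 1 / n)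
  else if l = k then
    1 - ((1 + magVal n k) / 2) * pMinus β (magVal n k - 1 / n)
      - ((1 - magVal n k) / 2) * pPlus β (magVal n k + 1 / n)
  else 0

lemma tanh_add_tanh (a b : ℝ) : tanh a + tanh b = sinh (a + b) / (cosh a * cosh b) := by
  rw [tanh_eq_sinh_div_cosh, tanh_eq_sinh_div_cosh, sinh_add,
    div_add_div _ _ (cosh_pos a).ne' (cosh_pos b).ne']

lemma tanh_sub_tanh (a b : ℝ) : tanh a - tanh b = sinh (a - b) / (cosh a * cosh b) := by
  rw [tanh_eq_sinh_div_cosh, tanh_eq_sinh_div_cosh, sinh_sub,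
    div_sub_div _ _ (cosh_pos a).ne' (cosh_pos b).ne']

lemma tanh_le_tanh {a b : ℝ} (h : a ≤ b) : tanh a ≤ tanh b := by
  have : 0 ≤ sinh (b - a) / (cosh b * cosh a) :=
    div_nonneg (sinh_nonneg_iff.2 (sub_nonneg.2 h)) (mul_pos (cosh_pos b) (cosh_pos a)).le
  rw [← tanh_sub_tanh] at this
  linarith

lemma cosh_mul_cosh_le_cosh_add_mul_cosh_sub (x d : ℝ) :
    cosh x * cosh x ≤ cosh (x + d) * cosh (x - d) := by
  rw [cosh_add, cosh_sub]
  nlinarith [cosh_sq x, cosh_sq d, sq_nonneg (sinh d)]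

lemma tanh_add_add_tanh_sub_le {x : ℝ} (hx : 0 ≤ x) (d : ℝ) :
    tanh (x + d) + tanh (x - d) ≤ 2 * tanh x := by
  have hsinh : 0 ≤ sinh (x + x) := sinh_nonneg_iff.2 (by linarith)
  calc tanh (x + d) + tanh (x - d) = sinh (x + x) / (cosh (x + d) * cosh (x - d)) := by
        rw [tanh_add_tanh, add_add_sub_cancel]
    _ ≤ sinh (x + x) / (cosh x * cosh x) :=
        div_le_div_of_nonneg_left hsinh (mul_pos (cosh_pos x) (cosh_pos x))
          (cosh_mul_cosh_le_cosh_add_mul_cosh_sub x d)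
    _ = 2 * tanh x := by rw [← tanh_add_tanh, two_mul]

lemma one_sub_mul_tanh_add_add_one_add_mul_tanh_sub_le {x d s : ℝ} (hx : 0 ≤ x) (hd : 0 ≤ d)
    (hs : 0 ≤ s) : (1 - s) * tanh (x + d) + (1 + s) * tanh (x - d) ≤ 2 * tanh x := by
  have hmono : s * tanh (x - d) ≤ s * tanh (x + d) :=
    mul_le_mul_of_nonneg_left (tanh_le_tanh (by linarith)) hs
  linarith [tanh_add_add_tanh_sub_le hx d]

section Drift

variable (β : ℝ) (n : ℕ) (s : ℝ)

def downRate : ℝ := (1 + s) / 2 * pMinus β (s - 1 / n)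

def upRate : ℝ := (1 - s) / 2 * pPlus β (s + 1 / n)

def magDrift : ℝ := 2 / n * (upRate β n s - downRate β n s)

lemma magDrift_eq : magDrift β n s =
    1 / n * (((1 - s) * tanh (β * (s + 1 / n)) + (1 + s) * tanh (β * (s - 1 / n))) / 2 - s) := by
  simp only [magDrift, upRate, downRate, pPlus, pMinus]
  ring

lemma magDrift_neg : magDrift β n (-s) = -magDrift β n s := by
  rw [magDrift_eq, magDrift_eq, show β * (-s + 1 / n) = -(β * (s - 1 / n)) by ring,
    show β * (-s - 1 / n) = -(β * (s + 1 / n)) by ring, tanh_neg, tanh_neg]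
  ring

variable {β n s}

lemma magDrift_le (hβ : 0 ≤ β) (hs : 0 ≤ s) :
    magDrift β n s ≤ 1 / n * (tanh (β * s) - s) := by
  have h := one_sub_mul_tanh_add_add_one_add_mul_tanh_sub_le (mul_nonneg hβ hs)
    (mul_nonneg hβ (one_div_nonneg.2 n.cast_nonneg)) hs
  rw [← mul_add, ← mul_sub] at h
  rw [magDrift_eq]
  gcongr
  linarith

lemma le_magDrift (hβ : 0 ≤ β) (hs : s ≤ 0) :
    1 / n * (tanh (β * s) - s) ≤ magDrift β n s := by
  have h := magDrift_le (n := n) hβ (neg_nonneg.2 hs)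
  rw [magDrift_neg, mul_neg, tanh_neg] at h
  linarith

end Drift

section Kernel

variable {β : ℝ} {n : ℕ}

lemma magVal_zero (hn : 0 < n) : magVal n 0 = -1 := by
  simp [magVal, (Nat.cast_pos.2 hn).ne']

lemma magVal_last (hn : 0 < n) : magVal n (Fin.last n) = 1 := by
  have : (n : ℝ) ≠ 0 := (Nat.cast_pos.2 hn).ne'
  simp only [magVal, Fin.val_last]
  field_simp
  ring

lemma magVal_castSucc (j : Fin n) : magVal n j.castSucc = magVal n j.succ - 2 / n := by
  simp only [magVal, Fin.val_castSucc, Fin.val_succ]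
  push_cast
  ring

lemma magKernel_eq (k l : Fin (n + 1)) : magKernel β n k l =
    (if (l : ℕ) + 1 = k then downRate β n (magVal n k) else 0) +
    (if (k : ℕ) + 1 = l then upRate β n (magVal n k) else 0) +
    (if l = k then 1 - downRate β n (magVal n k) - upRate β n (magVal n k) else 0) := by
  simp only [magKernel, downRate, upRate, Fin.ext_iff]
  split_ifs <;> first | omega | ring

lemma sum_ite_val_add_one_eq_succ {M : Type*} [AddCommMonoid M] (j : Fin n)
    (g : Fin (n + 1) → M) :
    ∑ l : Fin (n + 1), (if (l : ℕ) + 1 = j.succ then g l else 0) = g j.castSucc := by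
  have hl (l : Fin (n + 1)) : (l : ℕ) + 1 = j.succ ↔ l = j.castSucc := by simp [Fin.ext_iff]
  simp only [hl, Finset.sum_ite_eq', Finset.mem_univ, if_true]

lemma sum_ite_castSucc_add_one_eq_val {M : Type*} [AddCommMonoid M] (j : Fin n)
    (g : Fin (n + 1) → M) :
    ∑ l : Fin (n + 1), (if (j.castSucc : ℕ) + 1 = l then g l else 0) = g j.succ := by
  have hl (l : Fin (n + 1)) : (j.castSucc : ℕ) + 1 = l ↔ l = j.succ := by
    simp [Fin.ext_iff, eq_comm]
  simp only [hl, Finset.sum_ite_eq', Finset.mem_univ, if_true]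

lemma sum_ite_downRate_mul (hn : 0 < n) (k : Fin (n + 1)) (F : ℝ → ℝ) :
    ∑ l : Fin (n + 1),
        (if (l : ℕ) + 1 = k then downRate β n (magVal n k) * F (magVal n l) else 0) =
      downRate β n (magVal n k) * F (magVal n k - 2 / n) := by
  obtain rfl | ⟨j, rfl⟩ := Fin.eq_zero_or_eq_succ k
  · simp [downRate, magVal_zero hn]
  · rw [sum_ite_val_add_one_eq_succ, magVal_castSucc]

lemma sum_ite_upRate_mul (hn : 0 < n) (k : Fin (n + 1)) (F : ℝ → ℝ) :
    ∑ l : Fin (n + 1),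
        (if (k : ℕ) + 1 = l then upRate β n (magVal n k) * F (magVal n l) else 0) =
      upRate β n (magVal n k) * F (magVal n k + 2 / n) := by
  obtain ⟨j, rfl⟩ | rfl := Fin.eq_castSucc_or_eq_last k
  · rw [sum_ite_castSucc_add_one_eq_val, magVal_castSucc, sub_add_cancel]
  · simp [upRate, magVal_last hn]

lemma sum_magKernel_mul (hn : 0 < n) (k : Fin (n + 1)) (F : ℝ → ℝ) :
    ∑ l, magKernel β n k l * F (magVal n l) =
      downRate β n (magVal n k) * F (magVal n k - 2 / n) +
      upRate β n (magVal n k) * F (magVal n k + 2 / n) +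
      (1 - downRate β n (magVal n k) - upRate β n (magVal n k)) * F (magVal n k) := by
  simp only [magKernel_eq, add_mul, ite_mul, zero_mul, Finset.sum_add_distrib,
    sum_ite_downRate_mul hn, sum_ite_upRate_mul hn, Finset.sum_ite_eq', Finset.mem_univ, if_true]

lemma sum_magKernel_mul_sub_magVal (k : Fin (n + 1)) :
    ∑ l, magKernel β n k l * (magVal n l - magVal n k) = magDrift β n (magVal n k) := by
  rcases n.eq_zero_or_pos with rfl | hn
  · simp [magVal, magDrift]
  · rw [sum_magKernel_mul hn k (fun x => x - magVal n k), magDrift]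
    ring

lemma two_div_le_abs_magVal {k : Fin (n + 1)} (h : 1 / n < |magVal n k|) :
    2 / n ≤ |magVal n k| := by
  rcases n.eq_zero_or_pos with rfl | hn
  · simp [magVal] at h
  have hnR : (0 : ℝ) < n := Nat.cast_pos.2 hn
  have habs : |magVal n k| = ((|2 * (k : ℤ) - n| : ℤ) : ℝ) / n := by
    rw [magVal, abs_div, abs_of_pos hnR]
    push_cast
    ring
  rw [habs, div_lt_div_iff_of_pos_right hnR] at h
  rw [habs, div_le_div_iff_of_pos_right hnR]
  exact_mod_cast (show (1 : ℤ) < _ by exact_mod_cast h)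

lemma sum_magKernel_mul_abs {k : Fin (n + 1)} (h : 1 / n < |magVal n k|) :
    ∑ l, magKernel β n k l * |magVal n l| = |magVal n k| + magDrift β n |magVal n k| := by
  have hn : 0 < n := Nat.pos_of_ne_zero (by rintro rfl; simp [magVal] at h)
  have hgap := two_div_le_abs_magVal h
  have hstep : (0 : ℝ) ≤ 2 / n := by positivity
  rw [sum_magKernel_mul hn k abs]
  rcases abs_cases (magVal n k) with ⟨hs, -⟩ | ⟨hs, -⟩ <;> rw [hs] at hgap ⊢
  · rw [abs_of_nonneg (by linarith : 0 ≤ magVal n k - 2 / n),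
      abs_of_nonneg (by linarith : 0 ≤ magVal n k + 2 / n), magDrift]
    ring
  · rw [abs_of_nonpos (by linarith : magVal n k - 2 / n ≤ 0),
      abs_of_nonpos (by linarith : magVal n k + 2 / n ≤ 0), magDrift_neg, magDrift]
    ring

end Kernel

/-- Drift inequalities for the magnetization chain: for every `β ≥ 0`, `n`,
and state `s ∈ Ω_S`:
(i) if `s ≥ 0` then `E[S_{t+1} - S_t | S_t = s] ≤ (1/n)(tanh(βs) - s)`;
(ii) if `s ≤ 0` then `E[S_{t+1} - S_t | S_t = s] ≥ (1/n)(tanh(βs) - s)`;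
(iii) if `|s| > 1/n` then
`E[|S_{t+1}| | S_t = s] ≤ |s| + (1/n)(tanh(β|s|) - |s|)`. -/
theorem mag_chain_drift (β : ℝ) (hβ : 0 ≤ β) (n : ℕ) (k : Fin (n + 1)) :
    (0 ≤ magVal n k →
      ∑ l, magKernel β n k l * (magVal n l - magVal n k) ≤
        (1 / (n : ℝ)) * (Real.tanh (β * magVal n k) - magVal n k)) ∧
    (magVal n k ≤ 0 →
      (1 / (n : ℝ)) * (Real.tanh (β * magVal n k) - magVal n k) ≤
        ∑ l, magKernel β n k l * (magVal n l - magVal n k)) ∧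
    (1 / (n : ℝ) < |magVal n k| →
      ∑ l, magKernel β n k l * |magVal n l| ≤
        |magVal n k| +
          (1 / (n : ℝ)) * (Real.tanh (β * |magVal n k|) - |magVal n k|)) := by
  refine ⟨fun hs => ?_, fun hs => ?_, fun h => ?_⟩
  · rw [sum_magKernel_mul_sub_magVal]
    exact magDrift_le hβ hs
  · rw [sum_magKernel_mul_sub_magVal]
    exact le_magDrift hβ hs
  · rw [sum_magKernel_mul_abs h]
    exact add_le_add_right (magDrift_le hβ (abs_nonneg _)) _

end

end CW
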